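/- arXiv:math/0603175 — 2 statements merged into one kernel-verified Lean document; each statement's English description precedes it below -/
import Mathlib

section
/- If A′ ⊂ Φ̃⁺ contains two affine roots β + k₁δ and β + k₂δ with the same finite part β and k₁ < k₂, then removing β + k₂δ from A′ does not change the set W̃(A′) = {σ ∈ W̃ : σ(A′) ⊂ Φ̃⁺}. -/
open scoped BigOperators RealInnerProductSpace

noncomputable section

/-- Word length with respect to a generating set `S` (elements of `S` are involutions
in our applications, so no inverses are needed). -/
noncomputable def wordLength {G : Type*} [Group G] (S : Set G) (g : G) : ℕ :=
  sInf {k | ∃ l : List G, l.length = k ∧ (∀ x ∈ l, x ∈ S) ∧ l.prod = g}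

/-- Poincaré series (length generating function) of a subset `X` of a group
with respect to a length function `ℓ`. -/
noncomputable def poincareSeries {G : Type*} (ℓ : G → ℕ) (X : Set G) : PowerSeries ℚ :=
  PowerSeries.mk fun m => (Nat.card {w : G // w ∈ X ∧ ℓ w = m} : ℚ)

/-- A formal power series is (the expansion of) a rational function. -/
def IsRationalPS (f : PowerSeries ℚ) : Prop :=
  ∃ p q : Polynomial ℚ, q ≠ 0 ∧ (q : PowerSeries ℚ) * f = (p : PowerSeries ℚ)

variable (n : ℕ)

abbrev Euc (n : ℕ) := EuclideanSpace ℝ (Fin n)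

/-- The coroot of a vector `β`. -/
noncomputable def coroot (β : Euc n) : Euc n := (2 / ⟪β, β⟫) • β

/-- Data of an irreducible crystallographic root system `Φ` in `ℝⁿ`, with a choice of
simple roots, positive roots, highest root, reflections, Weyl vector and
vertices of the fundamental alcove. -/
structure RootSystemData (n : ℕ) where
  n_pos : 0 < n
  Φ : Set (Euc n)
  finite' : Φ.Finite
  nonempty' : Φ.Nonempty
  zero_not_mem : (0 : Euc n) ∉ Φ
  reduced : ∀ β ∈ Φ, ∀ c : ℝ, c • β ∈ Φ → c = 1 ∨ c = -1
  crystallographic : ∀ β ∈ Φ, ∀ γ ∈ Φ, ∃ k : ℤ, ⟪coroot n β, γ⟫ = (k : ℝ)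
  spans : Submodule.span ℝ Φ = ⊤
  irreducible : ∀ Φ₁ Φ₂ : Set (Euc n), Φ = Φ₁ ∪ Φ₂ →
    (∀ β ∈ Φ₁, ∀ γ ∈ Φ₂, ⟪β, γ⟫ = 0) → Φ₁ = ∅ ∨ Φ₂ = ∅
  /-- the reflection in (the hyperplane orthogonal to) a root -/
  sRefl : Euc n → (Euc n ≃ₗ[ℝ] Euc n)
  sRefl_apply : ∀ β : Euc n, β ≠ 0 → ∀ v,
    sRefl β v = v - (2 * ⟪β, v⟫ / ⟪β, β⟫) • β
  refl_maps_roots : ∀ β ∈ Φ, ∀ γ ∈ Φ, sRefl β γ ∈ Φ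
  /-- the simple roots -/
  simpleRoot : Fin n → Euc n
  simpleRoot_mem : ∀ i, simpleRoot i ∈ Φ
  /-- the positive roots -/
  Φpos : Set (Euc n)
  pos_subset : Φpos ⊆ Φ
  pos_or_neg : ∀ β ∈ Φ, β ∈ Φpos ∨ -β ∈ Φpos
  not_pos_and_neg : ∀ β ∈ Φpos, -β ∉ Φpos
  pos_is_nat_combo : ∀ β ∈ Φpos, ∃ c : Fin n → ℕ,
    β = ∑ i, (c i : ℝ) • simpleRoot i
  /-- the highest root -/
  highestRoot : Euc n
  highestRoot_mem : highestRoot ∈ Φpos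
  highest : ∀ β ∈ Φpos, ∃ c : Fin n → ℕ,
    highestRoot - β = ∑ i, (c i : ℝ) • simpleRoot i
  /-- the Weyl vector, characterized by `(ρ, α̌ᵢ) = 1` for all simple coroots -/
  rho : Euc n
  rho_spec : ∀ i, ⟪rho, coroot n (simpleRoot i)⟫ = 1
  /-- the nonzero vertices of the fundamental alcove -/
  vertex : Fin n → Euc n
  vertex_spec : {v : Euc n | (∀ i, 0 ≤ ⟪v, simpleRoot i⟫) ∧ ⟪v, highestRoot⟫ ≤ 1}
      = convexHull ℝ (insert 0 (Set.range vertex))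

namespace RootSystemData

variable {n} (D : RootSystemData n)

/-- The finite Weyl group, as a group of linear automorphisms of `V`. -/
def Wfin : Subgroup (Euc n ≃ₗ[ℝ] Euc n) := Subgroup.closure (D.sRefl '' D.Φ)

/-- The coroot lattice `Q̌`. -/
def Qlat : AddSubgroup (Euc n) := AddSubgroup.closure (coroot n '' D.Φ)

/-- Embedding of linear automorphisms into affine automorphisms. -/
def toAff : (Euc n ≃ₗ[ℝ] Euc n) →* (Euc n ≃ᵃ[ℝ] Euc n) where
  toFun e := e.toAffineEquiv
  map_one' := rfl
  map_mul' _ _ := rfl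

/-- Translation by a vector, as an affine automorphism. -/
def trn (α : Euc n) : Euc n ≃ᵃ[ℝ] Euc n := AffineEquiv.constVAdd ℝ (Euc n) α

/-- The affine simple reflection `s₀` (reflection in the affine hyperplane `(v, θ) = 1`). -/
def s0 : Euc n ≃ᵃ[ℝ] Euc n :=
  trn (coroot n D.highestRoot) * toAff (D.sRefl D.highestRoot)

/-- The Coxeter generating set `S̃ = {s₀, s₁, …, s_n}` of the affine Weyl group. -/
def Sgen : Set (Euc n ≃ᵃ[ℝ] Euc n) :=
  (Set.range fun i => toAff (D.sRefl (D.simpleRoot i))) ∪ {D.s0}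

/-- The affine Weyl group `W̃`, as a group of affine automorphisms of `V`. -/
def AffW : Subgroup (Euc n ≃ᵃ[ℝ] Euc n) := Subgroup.closure D.Sgen

/-- The Coxeter length function on the affine Weyl group. -/
noncomputable def len : (Euc n ≃ᵃ[ℝ] Euc n) → ℕ := wordLength D.Sgen

/-- The set of reflections `T̃ = ⋃_σ σ S̃ σ⁻¹` of the affine Weyl group. -/
def Refls : Set (Euc n ≃ᵃ[ℝ] Euc n) :=
  {r | ∃ σ ∈ D.AffW, ∃ s ∈ D.Sgen, r = σ * s * σ⁻¹}

/-- The (linearized) action of an affine transformation on `Ṽ = V ⊕ ℝδ`, where the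
pair `(β, k)` represents the affine root `β + kδ`. -/
def affAct (σ : Euc n ≃ᵃ[ℝ] Euc n) (γ : Euc n × ℝ) : Euc n × ℝ :=
  (σ.linear γ.1, γ.2 - ⟪σ 0, σ.linear γ.1⟫)

/-- The affine root system `Φ̃ = {β + kδ : β ∈ Φ, k ∈ ℤ}`. -/
def AffRoots : Set (Euc n × ℝ) :=
  {γ | γ.1 ∈ D.Φ ∧ ∃ k : ℤ, γ.2 = (k : ℝ)}

/-- The positive affine roots: affine roots that are non-negative integer combinations
of the simple affine roots `α₁, …, α_n, α₀ = δ - θ`. -/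
def PosAffRoots : Set (Euc n × ℝ) :=
  {γ ∈ D.AffRoots | ∃ c₀ : ℕ, ∃ c : Fin n → ℕ,
    γ = (c₀ : ℝ) • ((-D.highestRoot, (1 : ℝ)) : Euc n × ℝ)
      + ∑ i, (c i : ℝ) • ((D.simpleRoot i, (0 : ℝ)) : Euc n × ℝ)}

/-- The reflection `s_γ` in an affine root `γ = β + kδ`. -/
noncomputable def sAff (γ : Euc n × ℝ) : Euc n ≃ᵃ[ℝ] Euc n :=
  trn (-(2 * γ.2 / ⟪γ.1, γ.1⟫) • γ.1) * toAff (D.sRefl γ.1)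

/-- `W̃_A = {σ ∈ W̃ : ℓ(σr) > ℓ(σ) for all r ∈ A}`. -/
def WA (A : Set (Euc n ≃ᵃ[ℝ] Euc n)) : Set (Euc n ≃ᵃ[ℝ] Euc n) :=
  {σ | σ ∈ D.AffW ∧ ∀ r ∈ A, D.len σ < D.len (σ * r)}

/-- The image of the finite Weyl group in the affine Weyl group. -/
def WfinAff : Subgroup (Euc n ≃ᵃ[ℝ] Euc n) := D.Wfin.map toAff

/-- `W̃₀`: the set of minimal-length right coset representatives of `W` in `W̃`. -/
def W0 : Set (Euc n ≃ᵃ[ℝ] Euc n) :=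
  {w | w ∈ D.AffW ∧ ∀ v ∈ D.WfinAff, D.len w ≤ D.len (v * w)}

/-- The closed fundamental chamber `C`. -/
def Cham : Set (Euc n) := {v | ∀ i, 0 ≤ ⟪v, D.simpleRoot i⟫}

/-- The closed fundamental alcove `A_f`. -/
def Alc : Set (Euc n) := {v ∈ D.Cham | ⟪v, D.highestRoot⟫ ≤ 1}

/-- `mᵢ(u)`: the smallest integer `≥ 0` and `≥ -(uθⱼ, αᵢ)` for all nonzero
vertices `θⱼ` of the fundamental alcove. -/
noncomputable def mi (u : Euc n ≃ₗ[ℝ] Euc n) (i : Fin n) : ℕ :=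
  Finset.univ.sup fun j => (Int.ceil (-⟪u (D.vertex j), D.simpleRoot i⟫)).toNat

/-- `des_A(w) = #{r ∈ A : ℓ(wr) < ℓ(w)}`. -/
noncomputable def desA (A : Finset (Euc n ≃ᵃ[ℝ] Euc n)) (w : Euc n ≃ᵃ[ℝ] Euc n) : ℕ :=
  (A.filter fun r => D.len (w * r) < D.len w).card

end RootSystemData


open RootSystemData in
/-- if `A′` contains `β + k₁δ` and `β + k₂δ` with `k₁ < k₂`, removing
`β + k₂δ` does not change `W̃(A′) = {σ ∈ W̃ : σ(A′) ⊆ Φ̃⁺}`. -/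
theorem remove_redundant_affine_root (n : ℕ) (D : RootSystemData n)
    (A' : Set (Euc n × ℝ)) (hA : A' ⊆ D.PosAffRoots)
    (γ₁ γ₂ : Euc n × ℝ) (h1 : γ₁ ∈ A') (h2 : γ₂ ∈ A')
    (hsame : γ₁.1 = γ₂.1) (hlt : γ₁.2 < γ₂.2) :
    {σ | σ ∈ D.AffW ∧ ∀ γ ∈ A', affAct σ γ ∈ D.PosAffRoots} =
    {σ | σ ∈ D.AffW ∧ ∀ γ ∈ A' \ {γ₂}, affAct σ γ ∈ D.PosAffRoots} := by
  ext σ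
  simp only [Set.mem_setOf_eq]
  constructor
  · rintro ⟨hσ, h⟩
    exact ⟨hσ, fun γ hγ => h γ hγ.1⟩
  · rintro ⟨hσ, h⟩
    refine ⟨hσ, fun γ hγ => ?_⟩
    by_cases hg : γ = γ₂
    · subst hg
      have hne : γ₁ ≠ γ := fun e => by rw [e] at hlt; exact lt_irrefl _ hlt
      have h1' : affAct σ γ₁ ∈ D.PosAffRoots := h γ₁ ⟨h1, hne⟩
      obtain ⟨⟨hβΦ, j, hj⟩, c₀, c, hdec⟩ := h1'
      obtain ⟨⟨_, k₁, hk₁⟩, -⟩ := hA h1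
      obtain ⟨⟨_, k₂, hk₂⟩, -⟩ := hA h2
      obtain ⟨d, hd⟩ := D.pos_is_nat_combo D.highestRoot D.highestRoot_mem
      have hk12 : k₁ < k₂ := by
        rw [hk₁, hk₂] at hlt; exact_mod_cast hlt
      set tN : ℕ := (k₂ - k₁).toNat with htN
      have htNZ : ((tN : ℤ) : ℝ) = ((k₂ - k₁ : ℤ) : ℝ) := by
        rw [htN, Int.toNat_of_nonneg (by omega)]
      have htNK : (tN : ℝ) = (k₂ : ℝ) - (k₁ : ℝ) := by push_cast at htNZ; linarith
      have htNR : (tN : ℝ) = γ.2 - γ₁.2 := by rw [hk₁, hk₂, htNK]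
      -- component equations from hdec
      have hdec1 : σ.linear γ₁.1 =
          (c₀ : ℝ) • (-D.highestRoot) + ∑ i, (c i : ℝ) • D.simpleRoot i := by
        have := congrArg Prod.fst hdec
        simpa [affAct, Prod.fst_sum] using this
      have hdec2 : γ₁.2 - ⟪σ 0, σ.linear γ₁.1⟫ = (c₀ : ℝ) := by
        have := congrArg Prod.snd hdec
        simpa [affAct, Prod.snd_sum] using this
      refine ⟨⟨?_, ⟨j + (k₂ - k₁), ?_⟩⟩, c₀ + tN, fun i => c i + tN * d i, ?_⟩
      · show σ.linear γ.1 ∈ D.Φ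
        rw [← hsame]; exact hβΦ
      · show γ.2 - ⟪σ 0, σ.linear γ.1⟫ = _
        have : (affAct σ γ₁).2 = (j : ℝ) := hj
        simp only [affAct] at this
        rw [← hsame]
        push_cast
        linarith [htNR, htNK]
      · apply Prod.ext
        · show σ.linear γ.1 = _
          rw [← hsame, hdec1]
          simp only [Prod.fst_add, Prod.fst_sum, Prod.smul_fst, smul_eq_mul]
          push_cast
          rw [Finset.sum_congr rfl (fun i _ => add_smul (c i : ℝ) ((tN : ℝ) * d i) _),
            Finset.sum_add_distrib]
          have : ∑ i, ((tN : ℝ) * (d i : ℝ)) • D.simpleRoot i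
              = (tN : ℝ) • D.highestRoot := by
            rw [hd, Finset.smul_sum]
            exact Finset.sum_congr rfl fun i _ => (smul_smul _ _ _).symm
          rw [this]
          module
        · show γ.2 - ⟪σ 0, σ.linear γ.1⟫ = _
          simp only [Prod.snd_add, Prod.snd_sum, Prod.smul_snd, smul_eq_mul,
            mul_zero, mul_one, Finset.sum_const_zero, add_zero]
          rw [← hsame]
          push_cast
          linarith [hdec2, htNR]
    · exact h γ ⟨hγ, hg⟩
end
end

section
/- Every reflection subgroup W′ of an affine Weyl group W̃ has a finite canonical set of Coxeter generators; that is, the set S′ = {s_γ : γ ∈ Φ̃⁺ with N(s_γ) ∩ W′ = {s_γ}} (Dyer's canonical generators) is finite. -/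
/-!
Sort the canonical generators by linear part: linear parts of elements of `W̃` permute the finite
spanning set `Φ`, so there are finitely many classes. If `t₀ ≠ t₁` lie in one class, write
`t₁ = τ_{μ₁} t₀`; every other `t` in the class is `τ_μ t₀` with `μ ∈ ℝ μ₁`, since `μ` and `μ₁` are
`-1`-eigenvectors of the linear part of the reflection `t₀`. Pick `j ∈ ℤ` with `jμ₁ ≠ μ` and
`‖jμ₁ - μ‖ ≤ ‖μ₁‖`. The reflection `r = (t₁t₀)^j t₀` lies in `W′` and differs from `t`, and
`rt = τ_{jμ₁ - μ}` is a translation of `W̃` by a short coweight. There are finitely many of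
these, so `ℓ(rt) ≤ C` for a constant `C`; as `N(t) ∩ W′ = {t}`, this forces `ℓ(t) ≤ C`, and
`W̃` has only finitely many elements of bounded length.
-/

open scoped BigOperators RealInnerProductSpace

noncomputable section

variable (n : ℕ)

theorem zpow_mul_mem_of_conj_mem {G : Type*} [Group G] {H : Subgroup G} {T : Set G}
    (hT : ∀ g ∈ H, ∀ t ∈ T, g * t * g⁻¹ ∈ T) {a b : G} (haH : a ∈ H) (hbH : b ∈ H)
    (haT : a ∈ T) (hbT : b ∈ T) (ha : a⁻¹ = a) (hb : b⁻¹ = b) (j : ℤ) :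
    (a * b) ^ j * b ∈ T := by
  have hbb (x : G) : b * (b * x) = x := by
    conv_lhs => arg 1; rw [← hb]
    exact inv_mul_cancel_left b x
  have hinv (m : ℤ) : ((a * b) ^ m)⁻¹ = b * ((a * b) ^ m * b) := by
    have hsemi : SemiconjBy b (b * a) (a * b) := by
      rw [SemiconjBy, hbb, mul_assoc, ← mul_one (b * b), mul_assoc, hbb, mul_one]
    rw [← hsemi.zpow_right m, hbb, ← inv_zpow, mul_inv_rev, ha, hb]
  have hab : a * b ∈ H := mul_mem haH hbH
  -- `(ab)^(2m) b` and `(ab)^(2m+1) b` are the conjugates of `b` and `a` by `(ab)^m`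
  obtain ⟨m, rfl | rfl⟩ := Int.even_or_odd' j
  · convert hT _ (zpow_mem hab m) b hbT using 1
    rw [hinv, mul_assoc, hbb, ← mul_assoc, ← zpow_add, two_mul]
  · convert hT _ (zpow_mem hab m) a haT using 1
    rw [hinv, show 2 * m + 1 = m + 1 + m by ring, zpow_add, zpow_add_one]
    simp only [mul_assoc]

theorem exists_zsmul_ne_and_norm_zsmul_sub_le {E : Type*} [NormedAddCommGroup E]
    [NormedSpace ℝ E] {u v : E} (hu : u ≠ 0) (hv : v ∈ ℝ ∙ u) :
    ∃ j : ℤ, j • u ≠ v ∧ ‖j • u - v‖ ≤ ‖u‖ := by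
  obtain ⟨x, rfl⟩ := Submodule.mem_span_singleton.mp hv
  have hx : 0 < (⌊x⌋ + 1 : ℝ) - x := by linarith [Int.lt_floor_add_one x]
  have hx' : (⌊x⌋ + 1 : ℝ) - x ≤ 1 := by linarith [Int.floor_le x]
  have hdiff : (⌊x⌋ + 1 : ℤ) • u - x • u = ((⌊x⌋ + 1 : ℝ) - x) • u := by
    rw [← Int.cast_smul_eq_zsmul ℝ, sub_smul]; push_cast; rfl
  refine ⟨⌊x⌋ + 1, fun h => ?_, ?_⟩
  · rw [← sub_eq_zero, hdiff] at h
    exact (smul_ne_zero hx.ne' hu) h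
  · rw [hdiff, norm_smul, Real.norm_of_nonneg hx.le]
    exact mul_le_of_le_one_left (norm_nonneg u) hx'

namespace AffineEquiv

variable {k V P : Type*} [Ring k] [AddCommGroup V] [Module k V] [AddTorsor V P]

theorem conj_constVAdd (e : P ≃ᵃ[k] P) (v : V) :
    e * constVAdd k P v * e⁻¹ = constVAdd k P (e.linear v) := by
  ext p
  simp [coe_mul, inv_def, map_vadd]

theorem eq_constVAdd_of_linear_eq_one {e : V ≃ᵃ[k] V} (h : e.linear = 1) :
    e = constVAdd k V (e 0) := by
  ext v
  have := e.map_vadd 0 v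
  rw [vadd_eq_add, add_zero, h] at this
  simp [this, add_comm]

theorem linear_apply_eq_neg_of_mul_eq_constVAdd {a b : V ≃ᵃ[k] V} (ha : a⁻¹ = a) (hb : b⁻¹ = b)
    {v : V} (h : a * b = constVAdd k V v) : b.linear v = -v := by
  have hconj : b * constVAdd k V v * b⁻¹ = (constVAdd k V v)⁻¹ := by
    rw [← h]
    conv_rhs => rw [mul_inv_rev, ha, hb]
    group
  rw [conj_constVAdd, inv_def, constVAdd_symm] at hconj
  simpa using congrArg (fun e : V ≃ᵃ[k] V => e 0) hconj

end AffineEquiv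

theorem finite_setOf_wordLength_le {G : Type*} [Group G] {S : Set G} (hS : S.Finite) (C : ℕ) :
    {g | g ∈ Submonoid.closure S ∧ wordLength S g ≤ C}.Finite := by
  have : Finite S := hS.to_subtype
  refine ((List.finite_length_le S C).image fun l => (l.map (↑)).prod).subset ?_
  rintro g ⟨hg, hC⟩
  obtain ⟨l, hlS, rfl⟩ := Submonoid.exists_list_of_mem_closure hg
  obtain ⟨l', hlen, hl'S, hprod⟩ := Nat.sInf_mem (⟨_, l, rfl, hlS, rfl⟩ :
    {k | ∃ l' : List G, l'.length = k ∧ (∀ x ∈ l', x ∈ S) ∧ l'.prod = l.prod}.Nonempty)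
  obtain ⟨l'', rfl⟩ : l' ∈ Set.range (List.map ((↑) : S → G)) := by
    rwa [Set.range_list_map_coe]
  refine ⟨l'', ?_, hprod⟩
  show l''.length ≤ C
  rwa [← List.length_map, hlen]

namespace RootSystemData

variable {n : ℕ} (D : RootSystemData n)

theorem ne_zero_of_mem {β : Euc n} (hβ : β ∈ D.Φ) : β ≠ 0 :=
  fun h => D.zero_not_mem (h ▸ hβ)

theorem highestRoot_mem_Φ : D.highestRoot ∈ D.Φ :=
  D.pos_subset D.highestRoot_mem

theorem sRefl_sRefl {β : Euc n} (hβ : β ≠ 0) (v : Euc n) : D.sRefl β (D.sRefl β v) = v := by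
  have hββ : ⟪β, β⟫ ≠ 0 := inner_self_ne_zero.mpr hβ
  rw [D.sRefl_apply β hβ, D.sRefl_apply β hβ, inner_sub_right, real_inner_smul_right]
  match_scalars <;> field_simp
  ring

theorem sRefl_self {β : Euc n} (hβ : β ≠ 0) : D.sRefl β β = -β := by
  have hββ : ⟪β, β⟫ ≠ 0 := inner_self_ne_zero.mpr hβ
  rw [D.sRefl_apply β hβ]
  match_scalars
  field_simp
  ring

theorem inner_sRefl_left {β : Euc n} (hβ : β ≠ 0) (v w : Euc n) :
    ⟪D.sRefl β v, w⟫ = ⟪v, D.sRefl β w⟫ := by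
  rw [D.sRefl_apply β hβ, D.sRefl_apply β hβ, inner_sub_left, inner_sub_right,
    real_inner_smul_left, real_inner_smul_right, real_inner_comm w β, real_inner_comm v β]
  ring

theorem mem_span_of_sRefl_eq_neg {β v : Euc n} (hβ : β ≠ 0) (h : D.sRefl β v = -v) :
    v ∈ ℝ ∙ β := by
  rw [D.sRefl_apply β hβ] at h
  refine Submodule.mem_span_singleton.mpr ⟨⟪β, v⟫ / ⟪β, β⟫, ?_⟩
  linear_combination (norm := module) (-(1 / 2 : ℝ)) • h

theorem sRefl_mem_iff {β : Euc n} (hβ : β ∈ D.Φ) (γ : Euc n) :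
    D.sRefl β γ ∈ D.Φ ↔ γ ∈ D.Φ := by
  have hβ0 := D.ne_zero_of_mem hβ
  refine ⟨fun h => ?_, D.refl_maps_roots β hβ γ⟩
  simpa only [D.sRefl_sRefl hβ0] using D.refl_maps_roots β hβ _ h

def coweightLattice : AddSubgroup (Euc n) where
  carrier := {μ | ∀ γ ∈ D.Φ, ∃ k : ℤ, ⟪μ, γ⟫ = k}
  add_mem' {μ ν} hμ hν γ hγ := by
    obtain ⟨k, hk⟩ := hμ γ hγ
    obtain ⟨l, hl⟩ := hν γ hγ
    exact ⟨k + l, by rw [inner_add_left, hk, hl, Int.cast_add]⟩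
  zero_mem' γ _ := ⟨0, by simp⟩
  neg_mem' {μ} hμ γ hγ := by
    obtain ⟨k, hk⟩ := hμ γ hγ
    exact ⟨-k, by rw [inner_neg_left, hk, Int.cast_neg]⟩

theorem coroot_mem_coweightLattice {β : Euc n} (hβ : β ∈ D.Φ) :
    coroot n β ∈ D.coweightLattice :=
  D.crystallographic β hβ

theorem sRefl_mem_coweightLattice_iff {β : Euc n} (hβ : β ∈ D.Φ) (μ : Euc n) :
    D.sRefl β μ ∈ D.coweightLattice ↔ μ ∈ D.coweightLattice := by
  have hβ0 := D.ne_zero_of_mem hβ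
  have hmaps (ν : Euc n) (hν : ν ∈ D.coweightLattice) : D.sRefl β ν ∈ D.coweightLattice :=
    fun γ hγ => by simpa only [D.inner_sRefl_left hβ0] using hν _ (D.refl_maps_roots β hβ γ hγ)
  exact ⟨fun h => D.sRefl_sRefl hβ0 μ ▸ hmaps _ h, hmaps μ⟩

theorem eq_of_forall_inner_root_eq {μ ν : Euc n} (h : ∀ γ ∈ D.Φ, ⟪μ, γ⟫ = ⟪ν, γ⟫) : μ = ν := by
  refine ext_inner_right ℝ fun v => ?_
  have := LinearMap.ext_on D.spans (f := innerₛₗ ℝ μ) (g := innerₛₗ ℝ ν) h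
  exact LinearMap.congr_fun this v

theorem finite_coweightLattice_inter_closedBall (R : ℝ) :
    ((D.coweightLattice : Set (Euc n)) ∩ Metric.closedBall 0 R).Finite := by
  have : Finite D.Φ := D.finite'.to_subtype
  let bound (γ : D.Φ) : ℤ := ⌈R * ‖(γ : Euc n)‖⌉
  let pairing (μ : Euc n) (γ : D.Φ) : ℝ := ⟪μ, γ⟫
  have hinj : Function.Injective pairing := fun μ ν h =>
    D.eq_of_forall_inner_root_eq fun γ hγ => congrFun h ⟨γ, hγ⟩
  refine (Set.Finite.preimage hinj.injOn (Set.Finite.pi fun γ =>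
    (Set.finite_Icc (-bound γ) (bound γ)).image ((↑) : ℤ → ℝ))).subset ?_
  rintro μ ⟨hμ, hR⟩ γ -
  obtain ⟨k, hk⟩ := hμ γ γ.2
  have hkR : |(k : ℝ)| ≤ R * ‖(γ : Euc n)‖ := by
    rw [← hk]
    exact (abs_real_inner_le_norm μ γ).trans
      (mul_le_mul_of_nonneg_right (mem_closedBall_zero_iff.mp hR) (norm_nonneg _))
  obtain ⟨hk₁, hk₂⟩ := abs_le.mp (hkR.trans (Int.le_ceil _))
  exact ⟨k, ⟨by exact_mod_cast hk₁, by exact_mod_cast hk₂⟩, hk.symm⟩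

def symmetryGroup : Subgroup (Euc n ≃ᵃ[ℝ] Euc n) where
  carrier := {w | (∀ β, w.linear β ∈ D.Φ ↔ β ∈ D.Φ) ∧
    ∀ μ, w μ ∈ D.coweightLattice ↔ μ ∈ D.coweightLattice}
  mul_mem' ha hb := ⟨fun β => (ha.1 _).trans (hb.1 β), fun μ => (ha.2 _).trans (hb.2 μ)⟩
  one_mem' := ⟨fun _ => Iff.rfl, fun _ => Iff.rfl⟩
  inv_mem' {w} hw := ⟨fun β => by simpa [AffineEquiv.inv_def] using (hw.1 (w⁻¹.linear β)).symm,
    fun μ => by simpa [AffineEquiv.inv_def] using (hw.2 (w⁻¹ μ)).symm⟩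

theorem toAff_sRefl_mem_symmetryGroup {β : Euc n} (hβ : β ∈ D.Φ) :
    toAff (D.sRefl β) ∈ D.symmetryGroup :=
  ⟨D.sRefl_mem_iff hβ, D.sRefl_mem_coweightLattice_iff hβ⟩

theorem constVAdd_mem_symmetryGroup {μ : Euc n} (hμ : μ ∈ D.coweightLattice) :
    AffineEquiv.constVAdd ℝ (Euc n) μ ∈ D.symmetryGroup :=
  ⟨fun _ => Iff.rfl, fun _ => D.coweightLattice.add_mem_cancel_left hμ⟩

theorem affW_le_symmetryGroup : D.AffW ≤ D.symmetryGroup := by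
  refine (Subgroup.closure_le _).mpr ?_
  rintro s (⟨i, rfl⟩ | rfl)
  · exact D.toAff_sRefl_mem_symmetryGroup (D.simpleRoot_mem i)
  · exact mul_mem (D.constVAdd_mem_symmetryGroup (D.coroot_mem_coweightLattice D.highestRoot_mem_Φ))
      (D.toAff_sRefl_mem_symmetryGroup D.highestRoot_mem_Φ)

theorem finite_setOf_forall_apply_mem_iff :
    {L : Euc n ≃ₗ[ℝ] Euc n | ∀ β, L β ∈ D.Φ ↔ β ∈ D.Φ}.Finite := by
  have : Finite D.Φ := D.finite'.to_subtype
  let restrict (L : Euc n ≃ₗ[ℝ] Euc n) (β : D.Φ) : Euc n := L β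
  have hinj : Function.Injective restrict := fun L M h => LinearEquiv.toLinearMap_injective
    (LinearMap.ext_on D.spans fun β hβ => congrFun h ⟨β, hβ⟩)
  exact (Set.Finite.preimage hinj.injOn (Set.Finite.pi fun _ => D.finite')).subset
    fun L hL β _ => (hL β).mpr β.2

theorem inv_eq_self_of_mem_sgen {s : Euc n ≃ᵃ[ℝ] Euc n} (hs : s ∈ D.Sgen) : s⁻¹ = s := by
  refine inv_eq_of_mul_eq_one_right (AffineEquiv.ext fun v => ?_)
  rcases hs with ⟨i, rfl⟩ | rfl
  · exact D.sRefl_sRefl (D.ne_zero_of_mem (D.simpleRoot_mem i)) v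
  · have hθ := D.ne_zero_of_mem D.highestRoot_mem_Φ
    show coroot n D.highestRoot + D.sRefl D.highestRoot
      (coroot n D.highestRoot + D.sRefl D.highestRoot v) = v
    rw [map_add, coroot, map_smul, D.sRefl_self hθ, D.sRefl_sRefl hθ, smul_neg,
      add_neg_cancel_left]

theorem exists_linear_eq_sRefl_of_mem_sgen {s : Euc n ≃ᵃ[ℝ] Euc n} (hs : s ∈ D.Sgen) :
    ∃ β ∈ D.Φ, s.linear = D.sRefl β := by
  rcases hs with ⟨i, rfl⟩ | rfl
  exacts [⟨_, D.simpleRoot_mem i, rfl⟩, ⟨_, D.highestRoot_mem_Φ, rfl⟩]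

theorem finite_setOf_len_le (C : ℕ) : {w | w ∈ D.AffW ∧ D.len w ≤ C}.Finite := by
  have hinv : D.Sgen⁻¹ ⊆ D.Sgen := fun s hs => by
    rw [Set.mem_inv] at hs
    rwa [← inv_inv s, D.inv_eq_self_of_mem_sgen hs]
  have hclosure : (D.AffW : Set (Euc n ≃ᵃ[ℝ] Euc n)) = Submonoid.closure D.Sgen := by
    rw [AffW, ← Subgroup.coe_toSubmonoid, Subgroup.closure_toSubmonoid,
      Set.union_eq_left.mpr hinv]
  have hfin : D.Sgen.Finite := (Set.finite_range _).union (Set.finite_singleton _)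
  refine (finite_setOf_wordLength_le hfin C).subset fun w ⟨hw, hC⟩ => ⟨?_, hC⟩
  rw [← SetLike.mem_coe, ← hclosure]
  exact hw

theorem refls_subset_affW : D.Refls ⊆ D.AffW := by
  rintro t ⟨σ, hσ, s, hs, rfl⟩
  exact mul_mem (mul_mem hσ (Subgroup.subset_closure hs)) (inv_mem hσ)

theorem inv_eq_self_of_mem_refls {t : Euc n ≃ᵃ[ℝ] Euc n} (ht : t ∈ D.Refls) : t⁻¹ = t := by
  obtain ⟨σ, -, s, hs, rfl⟩ := ht
  rw [mul_inv_rev, mul_inv_rev, inv_inv, D.inv_eq_self_of_mem_sgen hs, mul_assoc]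

theorem conj_mem_refls {w t : Euc n ≃ᵃ[ℝ] Euc n} (hw : w ∈ D.AffW) (ht : t ∈ D.Refls) :
    w * t * w⁻¹ ∈ D.Refls := by
  obtain ⟨σ, hσ, s, hs, rfl⟩ := ht
  exact ⟨w * σ, mul_mem hw hσ, s, hs, by group⟩

theorem mem_span_of_linear_eq_neg {t : Euc n ≃ᵃ[ℝ] Euc n} (ht : t ∈ D.Refls) {v w : Euc n}
    (hv : t.linear v = -v) (hw : t.linear w = -w) (hw0 : w ≠ 0) : v ∈ ℝ ∙ w := by
  obtain ⟨σ, -, s, hs, rfl⟩ := ht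
  obtain ⟨β, hβ, hsβ⟩ := D.exists_linear_eq_sRefl_of_mem_sgen hs
  let x := σ.linear.symm
  have hx (u : Euc n) (hu : (σ * s * σ⁻¹).linear u = -u) : x u ∈ ℝ ∙ β := by
    refine D.mem_span_of_sRefl_eq_neg (D.ne_zero_of_mem hβ) ?_
    rw [← hsβ, ← σ.linear.symm_apply_apply (s.linear (x u))]
    change x ((σ * s * σ⁻¹).linear u) = -x u
    rw [hu, map_neg]
  obtain ⟨c, hc⟩ := Submodule.mem_span_singleton.mp (hx w hw)
  have hc0 : c ≠ 0 := by
    rintro rfl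
    exact hw0 (x.injective (by rw [← hc, zero_smul, map_zero]))
  rw [← Submodule.span_singleton_smul_eq (IsUnit.mk0 c hc0), hc] at hx
  obtain ⟨a, ha⟩ := Submodule.mem_span_singleton.mp (hx v hv)
  exact Submodule.mem_span_singleton.mpr ⟨a, x.injective (by rw [map_smul, ha])⟩

def canonicalGenerators (W' : Subgroup (Euc n ≃ᵃ[ℝ] Euc n)) : Set (Euc n ≃ᵃ[ℝ] Euc n) :=
  {t | t ∈ D.Refls ∧
    {r | r ∈ D.Refls ∧ D.len (r * t) < D.len t} ∩ (W' : Set (Euc n ≃ᵃ[ℝ] Euc n)) = {t}}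

variable {D} {W' : Subgroup (Euc n ≃ᵃ[ℝ] Euc n)}

theorem mem_of_mem_canonicalGenerators {t : Euc n ≃ᵃ[ℝ] Euc n}
    (ht : t ∈ D.canonicalGenerators W') : t ∈ W' :=
  (ht.2.symm.subset rfl).2

theorem eq_of_mem_canonicalGenerators {t r : Euc n ≃ᵃ[ℝ] Euc n}
    (ht : t ∈ D.canonicalGenerators W') (hr : r ∈ D.Refls) (hrW : r ∈ W')
    (hlt : D.len (r * t) < D.len t) : r = t :=
  ht.2.subset ⟨⟨hr, hlt⟩, hrW⟩

theorem mul_eq_constVAdd_of_linear_eq {t t₀ : Euc n ≃ᵃ[ℝ] Euc n} (ht₀ : t₀ ∈ D.Refls)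
    (h : t.linear = t₀.linear) : t * t₀ = AffineEquiv.constVAdd ℝ (Euc n) ((t * t₀) 0) := by
  refine AffineEquiv.eq_constVAdd_of_linear_eq_one ?_
  have h' : AffineEquiv.linearHom t = AffineEquiv.linearHom t₀⁻¹ := by
    rw [D.inv_eq_self_of_mem_refls ht₀]
    exact h
  change AffineEquiv.linearHom (t * t₀) = 1
  rw [map_mul, h', ← map_mul, inv_mul_cancel, map_one]

theorem exists_zpow_mul_ne_and_mul_eq_constVAdd {t₀ t₁ t : Euc n ≃ᵃ[ℝ] Euc n}
    (h₀ : t₀ ∈ D.Refls) (h₁ : t₁ ∈ D.Refls) (ht : t ∈ D.Refls) (hne : t₁ ≠ t₀)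
    (hlin₁ : t₁.linear = t₀.linear) (hlin : t.linear = t₀.linear) :
    ∃ j : ℤ, (t₁ * t₀) ^ j * t₀ ≠ t ∧ ∃ d ∈ D.coweightLattice, ‖d‖ ≤ ‖(t₁ * t₀) 0‖ ∧
      (t₁ * t₀) ^ j * t₀ * t = AffineEquiv.constVAdd ℝ (Euc n) d := by
  have hinv₀ := D.inv_eq_self_of_mem_refls h₀
  have hinv := D.inv_eq_self_of_mem_refls ht
  set μ₁ := (t₁ * t₀) 0
  set μ := (t * t₀) 0
  have e₁ : t₁ * t₀ = AffineEquiv.constVAdd ℝ (Euc n) μ₁ :=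
    D.mul_eq_constVAdd_of_linear_eq h₀ hlin₁
  have e : t * t₀ = AffineEquiv.constVAdd ℝ (Euc n) μ :=
    D.mul_eq_constVAdd_of_linear_eq h₀ hlin
  have hμ₁ : μ₁ ≠ 0 := fun h0 => hne <| by
    rw [← hinv₀]
    exact eq_inv_of_mul_eq_one_left (by rw [e₁, h0, AffineEquiv.constVAdd_zero]; rfl)
  have hμ : μ ∈ ℝ ∙ μ₁ := D.mem_span_of_linear_eq_neg h₀
    (AffineEquiv.linear_apply_eq_neg_of_mul_eq_constVAdd hinv hinv₀ e)
    (AffineEquiv.linear_apply_eq_neg_of_mul_eq_constVAdd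
      (D.inv_eq_self_of_mem_refls h₁) hinv₀ e₁) hμ₁
  obtain ⟨j, hjne, hjle⟩ := exists_zsmul_ne_and_norm_zsmul_sub_le hμ₁ hμ
  have hrt : (t₁ * t₀) ^ j * t₀ * t = AffineEquiv.constVAdd ℝ (Euc n) (j • μ₁ - μ) := by
    have : t₀ * t = (t * t₀)⁻¹ := by rw [mul_inv_rev, hinv₀, hinv]
    rw [mul_assoc, this, e₁, e, ← AffineEquiv.constVAdd_zsmul, AffineEquiv.inv_def,
      AffineEquiv.constVAdd_symm, AffineEquiv.mul_def, ← AffineEquiv.constVAdd_add,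
      sub_eq_add_neg]
  refine ⟨j, fun hrt_eq => hjne ?_, j • μ₁ - μ, ?_, hjle, hrt⟩
  · rw [hrt_eq, mul_eq_one_iff_eq_inv.mpr hinv.symm] at hrt
    exact sub_eq_zero.mp (by simpa using (congrArg (· 0) hrt).symm)
  · have hrtA : (t₁ * t₀) ^ j * t₀ * t ∈ D.AffW := mul_mem (mul_mem (zpow_mem (mul_mem
      (D.refls_subset_affW h₁) (D.refls_subset_affW h₀)) j) (D.refls_subset_affW h₀))
      (D.refls_subset_affW ht)
    have := ((D.affW_le_symmetryGroup hrtA).2 0).mpr (zero_mem _)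
    rwa [hrt, AffineEquiv.constVAdd_apply, vadd_eq_add, add_zero] at this

theorem len_le_of_linear_eq {t₀ t₁ t : Euc n ≃ᵃ[ℝ] Euc n}
    (h₀ : t₀ ∈ D.canonicalGenerators W') (h₁ : t₁ ∈ D.canonicalGenerators W')
    (ht : t ∈ D.canonicalGenerators W') (hne : t₁ ≠ t₀) (hlin₁ : t₁.linear = t₀.linear)
    (hlin : t.linear = t₀.linear) {C : ℕ}
    (hC : ∀ d ∈ D.coweightLattice, ‖d‖ ≤ ‖(t₁ * t₀) 0‖ →
      D.len (AffineEquiv.constVAdd ℝ (Euc n) d) ≤ C) :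
    D.len t ≤ C := by
  by_contra! hlt
  obtain ⟨j, hrt_ne, d, hd, hdle, hrt⟩ :=
    exists_zpow_mul_ne_and_mul_eq_constVAdd h₀.1 h₁.1 ht.1 hne hlin₁ hlin
  have hrW : (t₁ * t₀) ^ j * t₀ ∈ W' := mul_mem (zpow_mem (mul_mem
    (mem_of_mem_canonicalGenerators h₁) (mem_of_mem_canonicalGenerators h₀)) j)
    (mem_of_mem_canonicalGenerators h₀)
  have hrR : (t₁ * t₀) ^ j * t₀ ∈ D.Refls :=
    zpow_mul_mem_of_conj_mem (fun _ hg _ ht => D.conj_mem_refls hg ht)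
      (D.refls_subset_affW h₁.1) (D.refls_subset_affW h₀.1) h₁.1 h₀.1
      (D.inv_eq_self_of_mem_refls h₁.1) (D.inv_eq_self_of_mem_refls h₀.1) j
  exact hrt_ne (eq_of_mem_canonicalGenerators ht hrR hrW ((hrt ▸ hC d hd hdle).trans_lt hlt))

variable (D W')

theorem finite_canonicalGenerators_inter_linear_eq (L : Euc n ≃ₗ[ℝ] Euc n) :
    {t ∈ D.canonicalGenerators W' | t.linear = L}.Finite := by
  rcases Set.subsingleton_or_nontrivial {t ∈ D.canonicalGenerators W' | t.linear = L} with
    hF | ⟨t₁, ⟨h₁, hl₁⟩, t₀, ⟨h₀, hl₀⟩, hne⟩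
  · exact hF.finite
  obtain ⟨C, hC⟩ := ((D.finite_coweightLattice_inter_closedBall ‖(t₁ * t₀) 0‖).image
    fun d => D.len (AffineEquiv.constVAdd ℝ (Euc n) d)).bddAbove
  refine (D.finite_setOf_len_le C).subset fun t ⟨ht, hl⟩ => ⟨D.refls_subset_affW ht.1, ?_⟩
  exact len_le_of_linear_eq h₀ h₁ ht hne (hl₁.trans hl₀.symm) (hl.trans hl₀.symm)
    fun d hd hdR => hC ⟨d, ⟨hd, mem_closedBall_zero_iff.mpr hdR⟩, rfl⟩

theorem finite_canonicalGenerators : (D.canonicalGenerators W').Finite :=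
  (D.finite_setOf_forall_apply_mem_iff.biUnion fun L _ =>
    D.finite_canonicalGenerators_inter_linear_eq W' L).subset fun _ ht =>
      Set.mem_biUnion (D.affW_le_symmetryGroup (D.refls_subset_affW ht.1)).1 ⟨ht, rfl⟩

end RootSystemData

open RootSystemData in
theorem canonical_generators_finite_general (n : ℕ) (D : RootSystemData n)
    (W' : Subgroup (Euc n ≃ᵃ[ℝ] Euc n)) :
    Set.Finite {t : Euc n ≃ᵃ[ℝ] Euc n | t ∈ D.Refls ∧
      {r | r ∈ D.Refls ∧ D.len (r * t) < D.len t} ∩ (W' : Set (Euc n ≃ᵃ[ℝ] Euc n)) = {t}} :=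
  D.finite_canonicalGenerators W'

open RootSystemData in
/-- every reflection subgroup of an affine Weyl group has a finite set
of canonical (Dyer) generators `{t ∈ T̃ : N(t) ∩ W′ = {t}}`. -/
theorem canonical_generators_finite (n : ℕ) (D : RootSystemData n)
    (W' : Subgroup (Euc n ≃ᵃ[ℝ] Euc n)) (hle : W' ≤ D.AffW)
    (hrefl : ∃ R ⊆ D.Refls, W' = Subgroup.closure R) :
    Set.Finite {t : Euc n ≃ᵃ[ℝ] Euc n | t ∈ D.Refls ∧
      {r | r ∈ D.Refls ∧ D.len (r * t) < D.len t} ∩ (W' : Set (Euc n ≃ᵃ[ℝ] Euc n)) = {t}} :=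
  canonical_generators_finite_general n D W'
end
end
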